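/- Frame indifference (W(RF) = W(F) for all R ∈ SO(3)) of an energy density W with quadratic expansion W(Id + G) = Q(G) + o(|G|²) at the identity implies Q(G) = Q(sym G) for all G ∈ ℝ^{3×3}. -/

import Mathlib

/-!
Split `G = A + E` with `E = sym G` and `A = G - sym G` skew. The rotations `R t = exp (t A)`
satisfy `R t (Id + t E) = Id + t G + O(t²)`, and frame indifference gives
`W (R t (Id + t E)) = W (Id + t E)`. Dividing the quadratic expansion along these two curves
by `t²` and letting `t → 0` yields `Q G = Q E`.
-/

open scoped BigOperators Matrix
open Filter Topology

noncomputable section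

abbrev M3 := Matrix (Fin 3) (Fin 3) ℝ

/-- Frobenius norm of a 3×3 real matrix. -/
def frobNorm (F : M3) : ℝ := Real.sqrt (∑ i, ∑ j, (F i j) ^ 2)

/-- The special orthogonal group SO(3) as a set of matrices. -/
def SO3 : Set M3 := {R | Rᵀ * R = 1 ∧ R.det = 1}

/-- Symmetric part `sym G = (G + Gᵀ)/2`. -/
def symPart (G : M3) : M3 := (2⁻¹ : ℝ) • (G + Gᵀ)

open Asymptotics NormedSpace

theorem QuadraticMap.continuous_of_finiteDimensional {E : Type*} [NormedAddCommGroup E]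
    [NormedSpace ℝ E] [FiniteDimensional ℝ E] (Q : QuadraticForm ℝ E) : Continuous Q := by
  have hB := (LinearMap.toContinuousBilinearMap (QuadraticMap.associated Q)).continuous₂
  convert hB.comp (continuous_id.prodMk continuous_id) using 1
  ext x
  exact (QuadraticMap.associated_eq_self_apply ℝ Q x).symm

section Expansion

variable {E : Type*} [NormedAddCommGroup E] [NormedSpace ℝ E]

theorem isLittleO_sq_of_tendsto_abs_div_sq [Nontrivial E] {f : E → ℝ} (hf : ContinuousAt f 0)
    (h : Tendsto (fun x => |f x| / ‖x‖ ^ 2) (𝓝[≠] 0) (𝓝 0)) :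
    f =o[𝓝 0] fun x => ‖x‖ ^ 2 := by
  have hpunct : f =o[𝓝[≠] 0] fun x => ‖x‖ ^ 2 := by
    refine (isLittleO_iff_tendsto' (eventually_mem_nhdsWithin.mono fun x hx h0 =>
      absurd (pow_eq_zero_iff two_ne_zero |>.mp h0) (norm_ne_zero_iff.mpr hx))).mpr ?_
    refine (tendsto_zero_iff_abs_tendsto_zero _).mpr (h.congr fun x => ?_)
    simp [abs_div]
  have hf0 : f 0 = 0 := by
    have hsq : Tendsto (fun x : E => ‖x‖ ^ 2) (𝓝[≠] 0) (𝓝 0) := by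
      have hc : Continuous fun x : E => ‖x‖ ^ 2 := by fun_prop
      simpa using (hc.tendsto 0).mono_left nhdsWithin_le_nhds
    exact tendsto_nhds_unique (hf.tendsto.mono_left nhdsWithin_le_nhds)
      (hpunct.trans_tendsto hsq)
  rw [← nhdsNE_sup_pure]
  exact hpunct.sup (isLittleO_pure.mpr hf0)

theorem tendsto_div_sq_of_hasDerivAt {V : E → ℝ} {Q : QuadraticForm ℝ E} (hQ : Continuous Q)
    (hV : (fun x => V x - Q x) =o[𝓝 0] fun x => ‖x‖ ^ 2) {γ : ℝ → E} {v : E} (hγ0 : γ 0 = 0)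
    (hγ : HasDerivAt γ v 0) :
    Tendsto (fun t => V (γ t) / t ^ 2) (𝓝[≠] 0) (𝓝 (Q v)) := by
  have hslope : Tendsto (fun t : ℝ => t⁻¹ • γ t) (𝓝[≠] 0) (𝓝 v) := by
    refine (hasDerivAt_iff_tendsto_slope.mp hγ).congr fun t => ?_
    simp [slope_def_module, hγ0]
  have hγO : γ =O[𝓝 0] fun t => t := by simpa [hγ0] using hγ.isBigO_sub
  have hrem : (fun t => V (γ t) - Q (γ t)) =o[𝓝 0] fun t => t ^ 2 := by
    have hγt : Tendsto γ (𝓝 0) (𝓝 0) := hγ0 ▸ hγ.continuousAt.tendsto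
    refine (hV.comp_tendsto hγt).trans_isBigO ?_
    simpa [Function.comp_def] using hγO.norm_left.pow 2
  have hmain := (hrem.tendsto_div_nhds_zero.mono_left nhdsWithin_le_nhds).add
    ((hQ.tendsto v).comp hslope)
  rw [zero_add] at hmain
  refine hmain.congr' (eventually_mem_nhdsWithin.mono fun t (ht : t ≠ 0) => ?_)
  simp only [Function.comp_apply, QuadraticMap.map_smul, smul_eq_mul]
  field_simp
  ring

theorem QuadraticMap.apply_eq_apply_of_comp_eq {V : E → ℝ} {Q : QuadraticForm ℝ E}
    (hQ : Continuous Q)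
    (hV : (fun x => V x - Q x) =o[𝓝 0] fun x => ‖x‖ ^ 2) {γ₁ γ₂ : ℝ → E} {v₁ v₂ : E}
    (hγ₁0 : γ₁ 0 = 0) (hγ₁ : HasDerivAt γ₁ v₁ 0) (hγ₂0 : γ₂ 0 = 0) (hγ₂ : HasDerivAt γ₂ v₂ 0)
    (hVγ : ∀ t, V (γ₁ t) = V (γ₂ t)) : Q v₁ = Q v₂ := by
  refine tendsto_nhds_unique (tendsto_div_sq_of_hasDerivAt hQ hV hγ₁0 hγ₁) ?_
  simpa only [hVγ] using tendsto_div_sq_of_hasDerivAt hQ hV hγ₂0 hγ₂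

end Expansion

namespace Matrix

variable {n : Type*} [Fintype n] [DecidableEq n]

theorem det_exp_pos (A : Matrix n n ℝ) : 0 < (exp A).det := by
  have hsq : exp A = exp ((2⁻¹ : ℝ) • A) ^ 2 := by
    rw [← Matrix.exp_nsmul, two_nsmul, ← add_smul]
    norm_num
  have hne : (exp ((2⁻¹ : ℝ) • A)).det ≠ 0 := by
    have hu : IsUnit (exp ((2⁻¹ : ℝ) • A)) := Matrix.isUnit_exp _
    exact (Matrix.isUnit_iff_isUnit_det _ |>.mp hu).ne_zero
  rw [hsq, det_pow]
  positivity

theorem transpose_exp_mul_exp_of_transpose_eq_neg {A : Matrix n n ℝ} (hA : Aᵀ = -A) :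
    (exp A)ᵀ * exp A = 1 := by
  rw [← Matrix.exp_transpose, hA, ← Matrix.exp_add_of_commute _ _ (Commute.refl A).neg_left,
    neg_add_cancel, exp_zero]

end Matrix

theorem exp_mem_SO3 {A : M3} (hA : Aᵀ = -A) : exp A ∈ SO3 := by
  have horth := Matrix.transpose_exp_mul_exp_of_transpose_eq_neg hA
  have hdet : (exp A).det * (exp A).det = 1 := by
    simpa [Matrix.det_mul, Matrix.det_transpose] using congrArg Matrix.det horth
  exact ⟨horth, (mul_self_eq_one_iff.mp hdet).resolve_right
    (by linarith [Matrix.det_exp_pos A])⟩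

theorem transpose_sub_symPart (G : M3) : (G - symPart G)ᵀ = -(G - symPart G) := by
  rw [symPart, Matrix.transpose_sub, Matrix.transpose_smul, Matrix.transpose_add,
    Matrix.transpose_transpose]
  module

theorem hasDerivAt_exp_smul_mul_one_add_smul_sub_one {𝔸 : Type*} [NormedRing 𝔸]
    [NormedAlgebra ℝ 𝔸] [CompleteSpace 𝔸] (a b : 𝔸) :
    HasDerivAt (fun t : ℝ => exp (t • a) * (1 + t • b) - 1) (a + b) 0 := by
  have hrot := hasDerivAt_exp_smul_const' (𝕂 := ℝ) a 0
  have hlin := ((hasDerivAt_id (0 : ℝ)).smul_const b).const_add 1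
  simpa using (hrot.mul hlin).sub_const 1

open scoped Matrix.Norms.Frobenius in
theorem frobNorm_eq_norm (F : M3) : frobNorm F = ‖F‖ := by
  rw [frobNorm, Matrix.frobenius_norm_def, Real.sqrt_eq_rpow]
  simp [Real.norm_eq_abs, sq_abs]

theorem frame_indifference_implies_Q_sym_general (W : M3 → ℝ) (Q : QuadraticForm ℝ M3)
    (hWcont : Continuous W)
    (hFI : ∀ R ∈ SO3, ∀ F : M3, W (R * F) = W F)
    (hexp : Tendsto (fun G : M3 => |W (1 + G) - Q G| / (frobNorm G) ^ 2)
      (nhdsWithin 0 {0}ᶜ) (nhds 0)) :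
    ∀ G : M3, Q G = Q (symPart G) := by
  open scoped Matrix.Norms.Frobenius in
  intro G
  set E := symPart G
  have hQc := Q.continuous_of_finiteDimensional
  have hV : (fun X : M3 => W (1 + X) - Q X) =o[𝓝 0] fun X => ‖X‖ ^ 2 :=
    isLittleO_sq_of_tendsto_abs_div_sq (by fun_prop) (hexp.congr fun X => by rw [frobNorm_eq_norm])
  have hrot : ∀ t : ℝ, exp (t • (G - E)) ∈ SO3 := fun t =>
    exp_mem_SO3 (by rw [Matrix.transpose_smul, transpose_sub_symPart, smul_neg])
  have hGE := QuadraticMap.apply_eq_apply_of_comp_eq hQc hV (by simp)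
    (hasDerivAt_exp_smul_mul_one_add_smul_sub_one (G - E) E) (zero_smul ℝ E)
    ((hasDerivAt_id 0).smul_const E |>.congr_deriv (one_smul ℝ E))
    fun t => by
      rw [add_sub_cancel]
      exact hFI _ (hrot t) _
  rwa [sub_add_cancel] at hGE

/-- Frame indifference (`W(RF) = W(F)` for all `R ∈ SO(3)`) of a continuous energy density
`W : ℝ^{3×3} → [0,∞]` with quadratic expansion `W(Id + G) = Q(G) + o(|G|²)` at the identity
implies `Q(G) = Q(sym G)` for all `G ∈ ℝ^{3×3}`. -/
theorem frame_indifference_implies_Q_sym (W : M3 → ℝ) (Q : QuadraticForm ℝ M3)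
    (hW0 : ∀ F, 0 ≤ W F)
    (hWcont : Continuous W)
    (hFI : ∀ R ∈ SO3, ∀ F : M3, W (R * F) = W F)
    (hexp : Tendsto (fun G : M3 => |W (1 + G) - Q G| / (frobNorm G) ^ 2)
      (nhdsWithin 0 {0}ᶜ) (nhds 0)) :
    ∀ G : M3, Q G = Q (symPart G) :=
  frame_indifference_implies_Q_sym_general W Q hWcont hFI hexp
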